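/- arXiv:1001.2102 — 2 statements merged into one kernel-verified Lean document; each statement's English description precedes it below -/
import Mathlib

section
/- Wu's lemma: Let Θ ⊆ ℝ^p, θ_0 ∈ Θ, and let S_n : Θ → ℝ be random functions with minimizers θ̂_n = argmin_{θ∈Θ} S_n(θ). If for every sufficiently small δ > 0, almost surely liminf_n inf_{θ ∈ Θ, ‖θ−θ_0‖ ≥ δ} (S_n(θ) − S_n(θ_0)) > 0, then θ̂_n → θ_0 almost surely. -/
open MeasureTheory Filter

/-! A minimizer `θ̂` of `S n` on `Θ` satisfies `S n θ̂ - S n θ₀ ≤ 0`, so it cannot lie in a region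
where the infimum of `S n θ - S n θ₀` is positive. Hence, on the full-measure event of the
hypothesis, `θ̂ n` eventually lies within `δ` of `θ₀`; intersecting these events over
`δ = 1 / (k + 1)` gives almost sure convergence. -/

/-- On `ℝ`, an unbounded-below sequence has `liminf = 0`, so no boundedness hypothesis is needed
for thresholds `b ≥ 0`. -/
theorem Real.eventually_lt_of_lt_liminf {α : Type*} {f : Filter α} {u : α → ℝ} {b : ℝ}
    (hb : 0 ≤ b) (h : b < liminf u f) : ∀ᶠ x in f, b < u x := by
  refine Filter.eventually_lt_of_lt_liminf h ?_
  by_contra hu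
  rw [Real.liminf_of_not_isBoundedUnder hu] at h
  exact (hb.trans_lt h).false

theorem dist_lt_of_isMinOn_of_pos_sInf {X : Type*} [PseudoMetricSpace X] {Θ : Set X}
    {F : X → ℝ} {θ0 θhat : X} {δ : ℝ} (hθ0 : θ0 ∈ Θ) (hθhat : θhat ∈ Θ)
    (hmin : IsMinOn F Θ θhat)
    (hpos : 0 < sInf ((fun θ => F θ - F θ0) '' {θ | θ ∈ Θ ∧ δ ≤ dist θ θ0})) :
    dist θhat θ0 < δ := by
  by_contra hfar
  refine hpos.not_ge (Real.sInf_nonpos' ⟨F θhat - F θ0, ?_, ?_⟩)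
  · exact ⟨θhat, ⟨hθhat, not_lt.mp hfar⟩, rfl⟩
  · exact sub_nonpos.mpr (isMinOn_iff.mp hmin θ0 hθ0)

theorem eventually_dist_lt_of_pos_liminf {X : Type*} [PseudoMetricSpace X] {Θ : Set X}
    {F : ℕ → X → ℝ} {θ0 : X} {θhat : ℕ → X} {δ : ℝ} (hθ0 : θ0 ∈ Θ)
    (hmin : ∀ n, θhat n ∈ Θ ∧ ∀ θ ∈ Θ, F n (θhat n) ≤ F n θ)
    (hpos : 0 < atTop.liminf (fun n =>
      sInf ((fun θ => F n θ - F n θ0) '' {θ | θ ∈ Θ ∧ δ ≤ dist θ θ0}))) :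
    ∀ᶠ n in atTop, dist (θhat n) θ0 < δ :=
  (Real.eventually_lt_of_lt_liminf le_rfl hpos).mono fun n hn =>
    dist_lt_of_isMinOn_of_pos_sInf hθ0 (hmin n).1 (isMinOn_iff.mpr (hmin n).2) hn

theorem ae_tendsto_of_forall_ae_eventually_dist_lt {Ω X ι : Type*} [MeasurableSpace Ω]
    {μ : Measure Ω} [PseudoMetricSpace X] {l : Filter ι} {x : ι → Ω → X} {y : X} {δ0 : ℝ}
    (hδ0 : 0 < δ0) (h : ∀ δ, 0 < δ → δ ≤ δ0 → ∀ᵐ ω ∂μ, ∀ᶠ i in l, dist (x i ω) y < δ) :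
    ∀ᵐ ω ∂μ, Tendsto (fun i => x i ω) l (nhds y) := by
  have hk : ∀ k : ℕ, ∀ᵐ ω ∂μ, ∀ᶠ i in l, x i ω ∈ Metric.ball y (1 / (k + 1)) := fun k =>
    (h _ (lt_min hδ0 (by positivity)) (min_le_left _ _)).mono fun ω hω =>
      hω.mono fun i hi => hi.trans_le (min_le_right _ _)
  filter_upwards [ae_all_iff.mpr hk] with ω hω
  exact Metric.nhds_basis_ball_inv_nat_succ.tendsto_right_iff.mpr fun k _ => hω k

theorem stmt_3_general {Ω : Type*} [MeasurableSpace Ω] (μ : Measure Ω)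
    {p : ℕ} (Θ : Set (EuclideanSpace ℝ (Fin p))) (θ0 : EuclideanSpace ℝ (Fin p))
    (hθ0 : θ0 ∈ Θ)
    (S : ℕ → Ω → EuclideanSpace ℝ (Fin p) → ℝ)
    (θhat : ℕ → Ω → EuclideanSpace ℝ (Fin p))
    (hmin : ∀ n ω, θhat n ω ∈ Θ ∧ ∀ θ ∈ Θ, S n ω (θhat n ω) ≤ S n ω θ)
    (h : ∃ δ0 > (0:ℝ), ∀ δ : ℝ, 0 < δ → δ ≤ δ0 →
      ∀ᵐ ω ∂μ, 0 < atTop.liminf (fun n =>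
        sInf ((fun θ => S n ω θ - S n ω θ0) '' {θ | θ ∈ Θ ∧ δ ≤ dist θ θ0}))) :
    ∀ᵐ ω ∂μ, Tendsto (fun n => θhat n ω) atTop (nhds θ0) := by
  obtain ⟨δ0, hδ0, h⟩ := h
  refine ae_tendsto_of_forall_ae_eventually_dist_lt hδ0 fun δ hδ hδδ0 => ?_
  filter_upwards [h δ hδ hδδ0] with ω hω
  exact eventually_dist_lt_of_pos_liminf hθ0 (hmin · ω) hω

/-- Wu's lemma: if for every sufficiently small `δ > 0`, almost surely
`liminf_n inf_{θ ∈ Θ, ‖θ - θ0‖ ≥ δ} (S n θ - S n θ0) > 0`, then the minimizers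
`θhat n` converge almost surely to `θ0`. -/
theorem stmt_3 {Ω : Type*} [MeasurableSpace Ω] (μ : Measure Ω) [IsProbabilityMeasure μ]
    {p : ℕ} (Θ : Set (EuclideanSpace ℝ (Fin p))) (θ0 : EuclideanSpace ℝ (Fin p))
    (hθ0 : θ0 ∈ Θ)
    (S : ℕ → Ω → EuclideanSpace ℝ (Fin p) → ℝ)
    (θhat : ℕ → Ω → EuclideanSpace ℝ (Fin p))
    (hmin : ∀ n ω, θhat n ω ∈ Θ ∧ ∀ θ ∈ Θ, S n ω (θhat n ω) ≤ S n ω θ)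
    (h : ∃ δ0 > (0:ℝ), ∀ δ : ℝ, 0 < δ → δ ≤ δ0 →
      ∀ᵐ ω ∂μ, 0 < atTop.liminf (fun n =>
        sInf ((fun θ => S n ω θ - S n ω θ0) '' {θ | θ ∈ Θ ∧ δ ≤ dist θ θ0}))) :
    ∀ᵐ ω ∂μ, Tendsto (fun n => θhat n ω) atTop (nhds θ0) :=
  stmt_3_general μ Θ θ0 hθ0 S θhat hmin h
end

section
/- Toeplitz-type consistency for the Harris estimator: suppose m_0 > 1 and N_n m_0^{−n} → W a.s. with W > 0 on an event Ω_∞. Then on Ω_∞, m̂_n = (∑_{k=1}^n N_k)/(∑_{k=1}^n N_{k−1}) → m_0 almost surely. -/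
/-!
Toeplitz's lemma with the geometric weights `m0 ^ k`: since `N k = m0 ^ k * (N k / m0 ^ k)` with
`N k / m0 ^ k → W`, the partial sums satisfy `(∑_{k<n} N k) / m0 ^ n → W / (m0 - 1)`. The same
holds for the shifted sums with limit `m0 W / (m0 - 1)`, and `W > 0` makes the quotient tend to `m0`.
-/

open MeasureTheory Filter Finset Topology Asymptotics

theorem Filter.Tendsto.sum_range_mul_div_sum_range {w c : ℕ → ℝ} {L : ℝ}
    (hc : Tendsto c atTop (𝓝 L)) (hw : ∀ i, 0 ≤ w i)
    (hw_sum : Tendsto (fun n => ∑ i ∈ range n, w i) atTop atTop) :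
    Tendsto (fun n => (∑ i ∈ range n, w i * c i) / ∑ i ∈ range n, w i) atTop (𝓝 L) := by
  have herr : (fun i => w i * (c i - L)) =o[atTop] w := by
    simpa using (isBigO_refl w atTop).mul_isLittleO
      ((isLittleO_one_iff ℝ).2 (tendsto_sub_nhds_zero_iff.2 hc))
  have hsum := ((herr.sum_range hw hw_sum).tendsto_div_nhds_zero).add_const L
  rw [zero_add] at hsum
  refine hsum.congr' ?_
  filter_upwards [hw_sum.eventually_gt_atTop 0] with n hn
  simp only [mul_sub, sum_sub_distrib, ← sum_mul]
  field_simp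
  ring

theorem tendsto_geom_sum_div_pow {r : ℝ} (hr : 1 < r) :
    Tendsto (fun n => (∑ i ∈ range n, r ^ i) / r ^ n) atTop (𝓝 (r - 1)⁻¹) := by
  have hinv : Tendsto (fun n : ℕ => (r ^ n)⁻¹) atTop (𝓝 0) :=
    tendsto_inv_atTop_zero.comp (tendsto_pow_atTop_atTop_of_one_lt hr)
  have := (hinv.const_sub 1).div_const (r - 1)
  rw [sub_zero, one_div] at this
  refine this.congr fun n => ?_
  have : r ^ n ≠ 0 := by positivity
  rw [geom_sum_eq hr.ne']
  field_simp

theorem tendsto_sum_range_div_pow {r L : ℝ} {a : ℕ → ℝ} (hr : 1 < r)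
    (ha : Tendsto (fun n => a n / r ^ n) atTop (𝓝 L)) :
    Tendsto (fun n => (∑ i ∈ range n, a i) / r ^ n) atTop (𝓝 (L / (r - 1))) := by
  have hpos : ∀ i, 0 < r ^ i := fun i => pow_pos (zero_lt_one.trans hr) i
  have hw_sum : Tendsto (fun n => ∑ i ∈ range n, r ^ i) atTop atTop :=
    tendsto_atTop_mono (fun n => by
      simpa using sum_le_sum (s := range n) fun i _ => one_le_pow₀ (n := i) hr.le)
      tendsto_natCast_atTop_atTop
  have hmean := (ha.sum_range_mul_div_sum_range (fun i => (hpos i).le) hw_sum).mul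
    (tendsto_geom_sum_div_pow hr)
  rw [← div_eq_mul_inv] at hmean
  refine hmean.congr' ?_
  filter_upwards [hw_sum.eventually_gt_atTop 0] with n hn
  simp only [mul_div_cancel₀ _ (hpos _).ne']
  exact div_mul_div_cancel₀ hn.ne'

theorem tendsto_sum_range_succ_div_sum_range {r L : ℝ} {a : ℕ → ℝ} (hr : 1 < r) (hL : L ≠ 0)
    (ha : Tendsto (fun n => a n / r ^ n) atTop (𝓝 L)) :
    Tendsto (fun n => (∑ i ∈ range n, a (i + 1)) / ∑ i ∈ range n, a i) atTop (𝓝 r) := by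
  have hr0 : r ≠ 0 := (zero_lt_one.trans hr).ne'
  have hM : L / (r - 1) ≠ 0 := div_ne_zero hL (sub_ne_zero.2 hr.ne')
  have ha_succ : Tendsto (fun n => a (n + 1) / r ^ n) atTop (𝓝 (r * L)) :=
    ((ha.comp (tendsto_add_atTop_nat 1)).const_mul r).congr fun n => by
      simp only [Function.comp_apply, pow_succ]
      field_simp
  have hlim := (tendsto_sum_range_div_pow hr ha_succ).div (tendsto_sum_range_div_pow hr ha) hM
  rw [mul_div_assoc, mul_div_cancel_right₀ _ hM] at hlim
  exact hlim.congr fun n => div_div_div_cancel_right₀ (pow_ne_zero n hr0) _ _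

theorem sum_Icc_one_eq_sum_range_succ {M : Type*} [AddCommMonoid M] (f : ℕ → M) (n : ℕ) :
    ∑ k ∈ Icc 1 n, f k = ∑ k ∈ range n, f (k + 1) := by
  rw [range_eq_Ico, sum_Ico_add' f 0 n 1]
  rfl

theorem stmt_16_general {Ω : Type*} [MeasurableSpace Ω] (μ : Measure Ω)
    (N : ℕ → Ω → ℕ) (m0 : ℝ) (hm0 : 1 < m0) (W : Ω → ℝ) (Ωinf : Set Ω)
    (hconv : ∀ᵐ ω ∂μ, Tendsto (fun n => (N n ω : ℝ) / m0 ^ n) atTop (nhds (W ω)))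
    (hW : ∀ ω ∈ Ωinf, 0 < W ω) :
    ∀ᵐ ω ∂μ, ω ∈ Ωinf →
      Tendsto (fun n => (∑ k ∈ Finset.Icc 1 n, (N k ω : ℝ))
          / (∑ k ∈ Finset.Icc 1 n, (N (k - 1) ω : ℝ))) atTop (nhds m0) := by
  filter_upwards [hconv] with ω hω hmem
  simp only [sum_Icc_one_eq_sum_range_succ, Nat.add_sub_cancel]
  exact tendsto_sum_range_succ_div_sum_range (a := fun k => (N k ω : ℝ)) hm0 (hW ω hmem).ne' hω

/-- Toeplitz-type consistency of the Harris estimator: if `m0 > 1` and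
`N_n m0^{-n} → W` a.s. with `W > 0` on `Ω∞`, then on `Ω∞`,
`m̂_n = (∑_{k=1}^n N_k)/(∑_{k=1}^n N_{k-1}) → m0` a.s. -/
theorem stmt_16 {Ω : Type*} [MeasurableSpace Ω] (μ : Measure Ω) [IsProbabilityMeasure μ]
    (N : ℕ → Ω → ℕ) (m0 : ℝ) (hm0 : 1 < m0) (W : Ω → ℝ) (Ωinf : Set Ω)
    (hconv : ∀ᵐ ω ∂μ, Tendsto (fun n => (N n ω : ℝ) / m0 ^ n) atTop (nhds (W ω)))
    (hW : ∀ ω ∈ Ωinf, 0 < W ω) :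
    ∀ᵐ ω ∂μ, ω ∈ Ωinf →
      Tendsto (fun n => (∑ k ∈ Finset.Icc 1 n, (N k ω : ℝ))
          / (∑ k ∈ Finset.Icc 1 n, (N (k - 1) ω : ℝ))) atTop (nhds m0) :=
  stmt_16_general μ N m0 hm0 W Ωinf hconv hW
end
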